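/- Let T > 0, let A : ℝ → ℍ^{n×n} be continuous with A(t+T) = A(t), let M be the principal fundamental matrix of ẋ = A(t)x with M(0) = I, and let μ ∈ ℂ be such that ρ = e^{μT} is a characteristic multiplier (a standard eigenvalue of M(T)). Then there exists a function p : ℝ → ℍ^n, not identically zero, with p(t+T) = p(t) for all t, such that x(t) := p(t)·e^{μt} (right scalar multiplication by the quaternion e^{μt}, viewing ℂ ⊆ ℍ) is a solution of ẋ = A(t)x; moreover x(t+T) = x(t)·ρ for all t. -/

import Mathlib

open Matrix Polynomial
open scoped Quaternion

noncomputable section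

/-- The two complex components of a quaternion: `q = c1 q + (c2 q) * j`,
identifying `ℂ` with the real span of `1` and `i` in `ℍ`. -/
def Quaternion.c1 (q : ℍ[ℝ]) : ℂ := ⟨q.re, q.imI⟩

def Quaternion.c2 (q : ℍ[ℝ]) : ℂ := ⟨q.imJ, q.imK⟩

/-- The embedding of `ℂ` into `ℍ` as the real span of `1` and `i`. -/
def Complex.toQuat (z : ℂ) : ℍ[ℝ] := ⟨z.re, z.im, 0, 0⟩

/-- The complex adjoint matrix `χ_A` of a quaternion matrix `A = A₁ + A₂·j`:
the block matrix `[[A₁, A₂], [-conj A₂, conj A₁]]`. -/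
def chiMat {n : ℕ} (A : Matrix (Fin n) (Fin n) ℍ[ℝ]) :
    Matrix (Fin n ⊕ Fin n) (Fin n ⊕ Fin n) ℂ :=
  Matrix.fromBlocks (A.map Quaternion.c1) (A.map Quaternion.c2)
    ((-(A.map Quaternion.c2)).map (starRingEnd ℂ)) ((A.map Quaternion.c1).map (starRingEnd ℂ))

/-- `ρ` is a standard eigenvalue of the quaternion matrix `A`: an eigenvalue of the
complex adjoint matrix `χ_A` with nonnegative imaginary part. -/
def IsStdEigenvalue {n : ℕ} (A : Matrix (Fin n) (Fin n) ℍ[ℝ]) (ρ : ℂ) : Prop :=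
  (chiMat A).charpoly.IsRoot ρ ∧ 0 ≤ ρ.im

/-- `s` is the multiset of standard eigenvalues of `A` counted with multiplicity:
it has `n` elements, all with nonnegative imaginary part, and the characteristic
polynomial of `χ_A` is `∏_{z ∈ s} (X - z)·(X - conj z)`. -/
def IsStdEigs {n : ℕ} (A : Matrix (Fin n) (Fin n) ℍ[ℝ]) (s : Multiset ℂ) : Prop :=
  Multiset.card s = n ∧ (∀ z ∈ s, 0 ≤ z.im) ∧
    (chiMat A).charpoly =
      (s.map (fun z => (X - C z) * (X - C (starRingEnd ℂ z)))).prod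

/-- `x : ℝ → ℍ^n` is a solution of the linear quaternionic system `ẋ = A(t)x`. -/
def IsSol {n : ℕ} (A : ℝ → Matrix (Fin n) (Fin n) ℍ[ℝ]) (x : ℝ → Fin n → ℍ[ℝ]) : Prop :=
  ∀ t : ℝ, HasDerivAt x ((A t).mulVec (x t)) t

/-- The norm `‖x‖ = Σ_k |x_k|` on `ℍ^n`. -/
def vecNorm {n : ℕ} (x : Fin n → ℍ[ℝ]) : ℝ := ∑ k, ‖x k‖

/-- The norm `‖A‖ = Σ_{i,j} |a_{ij}|` on `ℍ^{n×n}`. -/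
def matNorm {n : ℕ} (A : Matrix (Fin n) (Fin n) ℍ[ℝ]) : ℝ := ∑ i, ∑ j, ‖A i j‖

/-- Stability (in the sense of Lyapunov) of the system `ẋ = A(t)x` at `t₀`. -/
def StableAt {n : ℕ} (A : ℝ → Matrix (Fin n) (Fin n) ℍ[ℝ]) (t₀ : ℝ) : Prop :=
  ∀ ε > (0:ℝ), ∃ δ > (0:ℝ), ∀ x : ℝ → Fin n → ℍ[ℝ], IsSol A x →
    vecNorm (x t₀) < δ → ∀ t ≥ t₀, vecNorm (x t) < ε

/-- Asymptotic stability of the system `ẋ = A(t)x` at `t₀`. -/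
def AsympStableAt {n : ℕ} (A : ℝ → Matrix (Fin n) (Fin n) ℍ[ℝ]) (t₀ : ℝ) : Prop :=
  StableAt A t₀ ∧ ∃ δ > (0:ℝ), ∀ x : ℝ → Fin n → ℍ[ℝ], IsSol A x →
    vecNorm (x t₀) < δ →
      Filter.Tendsto (fun t => vecNorm (x t)) Filter.atTop (nhds 0)

/-- `M` is a fundamental matrix of `ẋ = A(t)x`: entrywise `M'(t) = A(t)·M(t)`
and `M(t)` is invertible for every `t`. -/
def IsFundamental {n : ℕ} (A M : ℝ → Matrix (Fin n) (Fin n) ℍ[ℝ]) : Prop :=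
  (∀ (t : ℝ) (i j : Fin n), HasDerivAt (fun s => M s i j) ((A t * M t) i j) t) ∧
    ∀ t : ℝ, IsUnit (M t)

/-!
Under the identification `ℍⁿ ≅ ℂ²ⁿ`, `v₁ + v₂ j ↦ (v₁, -conj v₂)`, left multiplication by a
quaternion matrix `Q` becomes `χ_Q` and right multiplication by `ρ ∈ ℂ` becomes scalar
multiplication, so a complex eigenvector of `χ_{M(T)}` for `ρ` gives `v ≠ 0` with `M(T) v = v ρ`.
Since `A` is `T`-periodic, `M(t)⁻¹ M(t + T)` has zero derivative, whence `M(t + T) = M(t) M(T)`.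
Then `x(t) = M(t) v` solves the system with `x(t + T) = x(t) ρ`, and `p(t) = x(t) e^{-μt}` is
`T`-periodic because `ρ = e^{μT}`.
-/

open ComplexConjugate

namespace Complex

@[simp] lemma toQuat_re (z : ℂ) : z.toQuat.re = z.re := rfl
@[simp] lemma toQuat_imI (z : ℂ) : z.toQuat.imI = z.im := rfl
@[simp] lemma toQuat_imJ (z : ℂ) : z.toQuat.imJ = 0 := rfl
@[simp] lemma toQuat_imK (z : ℂ) : z.toQuat.imK = 0 := rfl

lemma toQuat_mul (a b : ℂ) : (a * b).toQuat = a.toQuat * b.toQuat := by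
  ext <;> simp [mul_re, mul_im]

@[simp] lemma toQuat_one : (1 : ℂ).toQuat = 1 := by
  ext <;> simp

lemma toQuat_exp_neg_mul_toQuat_exp (z : ℂ) : (exp (-z)).toQuat * (exp z).toQuat = 1 := by
  rw [← toQuat_mul, ← exp_add, neg_add_cancel, exp_zero, toQuat_one]

end Complex

namespace Quaternion

@[simp] lemma c1_re (q : ℍ[ℝ]) : q.c1.re = q.re := rfl
@[simp] lemma c1_im (q : ℍ[ℝ]) : q.c1.im = q.imI := rfl
@[simp] lemma c2_re (q : ℍ[ℝ]) : q.c2.re = q.imJ := rfl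
@[simp] lemma c2_im (q : ℍ[ℝ]) : q.c2.im = q.imK := rfl

lemma c1_sum {ι : Type*} (s : Finset ι) (f : ι → ℍ[ℝ]) :
    (∑ i ∈ s, f i).c1 = ∑ i ∈ s, (f i).c1 :=
  map_sum (AddMonoidHom.mk' c1 fun p q => by apply Complex.ext <;> simp) f s

lemma c2_sum {ι : Type*} (s : Finset ι) (f : ι → ℍ[ℝ]) :
    (∑ i ∈ s, f i).c2 = ∑ i ∈ s, (f i).c2 :=
  map_sum (AddMonoidHom.mk' c2 fun p q => by apply Complex.ext <;> simp) f s

lemma c1_mul (p q : ℍ[ℝ]) : (p * q).c1 = p.c1 * q.c1 - p.c2 * conj q.c2 := by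
  apply Complex.ext <;> simp <;> ring

lemma c2_mul (p q : ℍ[ℝ]) : (p * q).c2 = p.c1 * q.c2 + p.c2 * conj q.c1 := by
  apply Complex.ext <;> simp <;> ring

@[simp] lemma c1_toQuat (z : ℂ) : z.toQuat.c1 = z := rfl
@[simp] lemma c2_toQuat (z : ℂ) : z.toQuat.c2 = 0 := rfl

end Quaternion

open Quaternion

section ComplexAdjoint

variable {n : ℕ}

def toComplexPair (v : Fin n → ℍ[ℝ]) : Fin n ⊕ Fin n → ℂ :=
  Sum.elim (fun k => (v k).c1) (fun k => -conj (v k).c2)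

def ofComplexPair (c : Fin n ⊕ Fin n → ℂ) : Fin n → ℍ[ℝ] :=
  fun k => ⟨(c (.inl k)).re, (c (.inl k)).im, -(c (.inr k)).re, (c (.inr k)).im⟩

lemma toComplexPair_ofComplexPair (c : Fin n ⊕ Fin n → ℂ) :
    toComplexPair (ofComplexPair c) = c := by
  funext k
  rcases k with k | k <;> apply Complex.ext <;> simp [toComplexPair, ofComplexPair, c1, c2]

lemma toComplexPair_injective : Function.Injective (toComplexPair (n := n)) := by
  intro v w h
  funext k
  have h1 := congrFun h (.inl k)
  have h2 := congrFun h (.inr k)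
  simp only [toComplexPair, Sum.elim_inl, Sum.elim_inr, neg_inj, (RingHom.injective _).eq_iff]
    at h1 h2
  ext
  · exact congrArg Complex.re h1
  · exact congrArg Complex.im h1
  · exact congrArg Complex.re h2
  · exact congrArg Complex.im h2

lemma chiMat_mulVec_toComplexPair (Q : Matrix (Fin n) (Fin n) ℍ[ℝ]) (v : Fin n → ℍ[ℝ]) :
    chiMat Q *ᵥ toComplexPair v = toComplexPair (Q *ᵥ v) := by
  funext k
  rcases k with k | k <;>
    simp [chiMat, toComplexPair, mulVec, dotProduct, Fintype.sum_sum_type,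
      c1_sum, c2_sum, c1_mul, c2_mul, Finset.sum_add_distrib, sub_eq_add_neg]

lemma toComplexPair_mul_toQuat (v : Fin n → ℍ[ℝ]) (ρ : ℂ) :
    toComplexPair (fun k => v k * ρ.toQuat) = ρ • toComplexPair v := by
  funext k
  rcases k with k | k <;> simp [toComplexPair, c1_mul, c2_mul] <;> ring

theorem exists_mulVec_eq_mul_toQuat_of_isRoot_charpoly_chiMat
    {Q : Matrix (Fin n) (Fin n) ℍ[ℝ]} {ρ : ℂ} (h : (chiMat Q).charpoly.IsRoot ρ) :
    ∃ v : Fin n → ℍ[ℝ], v ≠ 0 ∧ Q *ᵥ v = fun k => v k * ρ.toQuat := by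
  rw [← Matrix.charpoly_toLin', ← Module.End.hasEigenvalue_iff_isRoot_charpoly] at h
  obtain ⟨c, hc, hc0⟩ := h.exists_hasEigenvector
  rw [Module.End.mem_eigenspace_iff, Matrix.toLin'_apply] at hc
  refine ⟨ofComplexPair c, fun h0 => hc0 ?_, toComplexPair_injective ?_⟩
  · rw [← toComplexPair_ofComplexPair c, h0]
    funext k
    rcases k with k | k <;> apply Complex.ext <;> simp [toComplexPair]
  · rw [← chiMat_mulVec_toComplexPair, toComplexPair_mul_toQuat, toComplexPair_ofComplexPair, hc]

end ComplexAdjoint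

open scoped Ring

section LinearODE

variable {R : Type*} [NormedRing R] [NormedAlgebra ℝ R] [CompleteSpace R] {A M N : ℝ → R}

lemma hasDerivAt_inverse_of_hasDerivAt_mul (hM : ∀ t, HasDerivAt M (A t * M t) t) {t : ℝ}
    (hMt : IsUnit (M t)) : HasDerivAt (fun s => (M s)⁻¹ʳ) (-((M t)⁻¹ʳ * A t)) t := by
  obtain ⟨u, hu⟩ := hMt
  have := (hasFDerivAt_ringInverse (𝕜 := ℝ) u).comp_hasDerivAt_of_eq t (hM t) hu
  simpa [← hu, mul_assoc, Function.comp_def] using this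

theorem eq_mul_inverse_mul_of_hasDerivAt_mul (hM : ∀ t, HasDerivAt M (A t * M t) t)
    (hMu : ∀ t, IsUnit (M t)) (hN : ∀ t, HasDerivAt N (A t * N t) t) (t : ℝ) :
    N t = M t * ((M 0)⁻¹ʳ * N 0) := by
  have hderiv : ∀ s, HasDerivAt (fun s => (M s)⁻¹ʳ * N s) 0 s := fun s => by
    simpa [mul_assoc] using (hasDerivAt_inverse_of_hasDerivAt_mul hM (hMu s)).fun_mul (hN s)
  have hconst := is_const_of_deriv_eq_zero (fun s => (hderiv s).differentiableAt)
    (fun s => (hderiv s).deriv) t 0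
  rw [← hconst, ← mul_assoc, Ring.mul_inverse_cancel _ (hMu t), one_mul]

end LinearODE

lemma Matrix.mulVec_mul_const {m l α : Type*} [Fintype l] [NonUnitalSemiring α]
    (Q : Matrix m l α) (v : l → α) (q : α) :
    (Q *ᵥ fun k => v k * q) = fun k => (Q *ᵥ v) k * q := by
  funext k
  simp [mulVec, dotProduct, Finset.sum_mul, mul_assoc]

section FundamentalMatrix

attribute [local instance] Matrix.linftyOpNormedRing Matrix.linftyOpNormedAlgebra

variable {n : ℕ} {A M : ℝ → Matrix (Fin n) (Fin n) ℍ[ℝ]}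

lemma IsFundamental.hasDerivAt (hM : IsFundamental A M) (t : ℝ) : HasDerivAt M (A t * M t) t :=
  hasDerivAt_pi.2 fun i => hasDerivAt_pi.2 (hM.1 t i)

lemma IsFundamental.add_period_eq_mul (hM : IsFundamental A M) {T : ℝ}
    (hAper : ∀ t, A (t + T) = A t) (hM0 : M 0 = 1) (t : ℝ) : M (t + T) = M t * M T := by
  have hMT : ∀ s, HasDerivAt (fun s => M (s + T)) (A s * M (s + T)) s := fun s => by
    rw [← hAper s]
    exact (hM.hasDerivAt (s + T)).comp_add_const s T
  simpa [hM0] using eq_mul_inverse_mul_of_hasDerivAt_mul hM.hasDerivAt hM.2 hMT t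

lemma IsFundamental.isSol_mulVec (hM : IsFundamental A M) (v : Fin n → ℍ[ℝ]) :
    IsSol A (fun t => M t *ᵥ v) := by
  refine fun t => hasDerivAt_pi.2 fun k => ?_
  rw [mulVec_mulVec]
  simp only [mulVec, dotProduct]
  exact HasDerivAt.fun_sum fun j _ => (hM.1 t k j).mul_const (v j)

end FundamentalMatrix

theorem stmt16_general {n : ℕ} (T : ℝ) (A M : ℝ → Matrix (Fin n) (Fin n) ℍ[ℝ])
    (hAper : ∀ t, A (t + T) = A t) (hM : IsFundamental A M)
    (hM0 : M 0 = 1) (μ ρ : ℂ) (hρ : ρ = Complex.exp (μ * (T : ℂ)))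
    (hmult : IsStdEigenvalue (M T) ρ) :
    ∃ p : ℝ → Fin n → ℍ[ℝ], p ≠ 0 ∧ (∀ t, p (t + T) = p t) ∧
      IsSol A (fun t k => p t k * Complex.toQuat (Complex.exp (μ * (t : ℂ)))) ∧
      ∀ (t : ℝ) (k : Fin n),
        p (t + T) k * Complex.toQuat (Complex.exp (μ * ((t + T : ℝ) : ℂ))) =
          p t k * Complex.toQuat (Complex.exp (μ * (t : ℂ))) * Complex.toQuat ρ := by
  obtain ⟨v, hv0, hv⟩ := exists_mulVec_eq_mul_toQuat_of_isRoot_charpoly_chiMat hmult.1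
  have hshift : ∀ t, M (t + T) *ᵥ v = fun k => (M t *ᵥ v) k * ρ.toQuat := fun t => by
    rw [hM.add_period_eq_mul hAper hM0, ← mulVec_mulVec, hv, mulVec_mul_const]
  have hexp : ∀ t : ℝ,
      ρ.toQuat * (Complex.exp (-(μ * ↑(t + T)))).toQuat = (Complex.exp (-(μ * t))).toQuat :=
    fun t => by
      rw [hρ, ← Complex.toQuat_mul, ← Complex.exp_add]
      congr 2
      push_cast
      ring
  have hpx : ∀ (t : ℝ) k,
      (M t *ᵥ v) k * (Complex.exp (-(μ * t))).toQuat * (Complex.exp (μ * t)).toQuat =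
        (M t *ᵥ v) k :=
    fun t k => by rw [mul_assoc, Complex.toQuat_exp_neg_mul_toQuat_exp, mul_one]
  refine ⟨fun t k => (M t *ᵥ v) k * (Complex.exp (-(μ * t))).toQuat, fun hp => hv0 ?_,
    fun t => ?_, ?_, fun t k => ?_⟩
  · funext k
    simpa [hM0] using congrFun (congrFun hp 0) k
  · funext k
    dsimp only
    rw [hshift, mul_assoc, hexp]
  · simpa only [hpx] using hM.isSol_mulVec v
  · rw [hpx, hpx, hshift]

/-- if `ρ = e^{μT}` is a characteristic multiplier, there is a nontrivial
`T`-periodic `p` with `x(t) = p(t)·e^{μt}` a solution and `x(t+T) = x(t)·ρ`. -/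
theorem stmt16 {n : ℕ} (T : ℝ) (hT : 0 < T) (A M : ℝ → Matrix (Fin n) (Fin n) ℍ[ℝ])
    (hA : Continuous A) (hAper : ∀ t, A (t + T) = A t) (hM : IsFundamental A M)
    (hM0 : M 0 = 1) (μ ρ : ℂ) (hρ : ρ = Complex.exp (μ * (T : ℂ)))
    (hmult : IsStdEigenvalue (M T) ρ) :
    ∃ p : ℝ → Fin n → ℍ[ℝ], p ≠ 0 ∧ (∀ t, p (t + T) = p t) ∧
      IsSol A (fun t k => p t k * Complex.toQuat (Complex.exp (μ * (t : ℂ)))) ∧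
      ∀ (t : ℝ) (k : Fin n),
        p (t + T) k * Complex.toQuat (Complex.exp (μ * ((t + T : ℝ) : ℂ))) =
          p t k * Complex.toQuat (Complex.exp (μ * (t : ℂ))) * Complex.toQuat ρ :=
  stmt16_general T A M hAper hM hM0 μ ρ hρ hmult
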